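/- arXiv:nlin/0307020 — 2 statements merged into one kernel-verified Lean document; each statement's English description precedes it below -/
import Mathlib

section
/- For D = 1, setting γ = u₀ c₁ u₁ and η = u₀⁻¹ c₁ u₂⁻¹ c₁⁻¹ u₀, one has φ³(c₁) = c₁⁻¹ γ c₁⁻¹ η c₁ γ⁻¹ c₁. -/
abbrev G : Type := FreeGroup (ℤ ⊕ ℤ)

/-- generator cₙ -/
def c (n : ℤ) : G := FreeGroup.of (Sum.inl n)
/-- generator uₙ -/
def u (n : ℤ) : G := FreeGroup.of (Sum.inr n)

/-- F = c₁ c₂ ⋯ c_D -/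
def F (D : ℕ) : G := ((List.range D).map (fun i => c ((i : ℤ) + 1))).prod

/-- the tangle endomorphism for minimum delay time D -/
def φ (D : ℕ) : G →* G := FreeGroup.lift fun x =>
  match x with
  | Sum.inl n => if n = (D : ℤ) then (F D)⁻¹ * (u 0)⁻¹ * F D else c (n + 1)
  | Sum.inr n => u (n + 1)

lemma φ_u (D : ℕ) (n : ℤ) : φ D (u n) = u (n + 1) := by
  simp [φ, u]

lemma φ_c_self (D : ℕ) : φ D (c D) = (F D)⁻¹ * (u 0)⁻¹ * F D := by
  simp [φ, c]

lemma F_one : F 1 = c 1 := by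
  simp [F]

lemma φ_one_c_one : φ 1 (c 1) = (c 1)⁻¹ * (u 0)⁻¹ * c 1 := by
  simpa [F_one] using φ_c_self 1

lemma φ_one_iterate_two_c_one :
    (φ 1)^[2] (c 1) = (c 1)⁻¹ * u 0 * c 1 * (u 1)⁻¹ * (c 1)⁻¹ * (u 0)⁻¹ * c 1 := by
  simp only [Function.iterate_succ_apply', Function.iterate_zero_apply, φ_one_c_one, map_mul,
    map_inv, φ_u]
  norm_num
  group

theorem stmt_4 :
    let γ : G := u 0 * c 1 * u 1
    let η : G := (u 0)⁻¹ * c 1 * (u 2)⁻¹ * (c 1)⁻¹ * u 0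
    (⇑(φ 1))^[3] (c 1) = (c 1)⁻¹ * γ * (c 1)⁻¹ * η * c 1 * γ⁻¹ * c 1 := by
  intro γ η
  rw [Function.iterate_succ_apply', φ_one_iterate_two_c_one]
  simp only [map_mul, map_inv, φ_one_c_one, φ_u, γ, η]
  norm_num
  group
end

section
/- Assume D > 1. For every n with 3 ≤ n ≤ D+1, φⁿ(c_D) = (F⁻¹ γ c₂ u₂ ⋯ c_{n-2} u_{n-2}) · (c_{n-1} u_{n-1}⁻¹ c_{n-1}⁻¹) · (u_{n-2}⁻¹ c_{n-2}⁻¹ ⋯ u₂⁻¹ c₂⁻¹ γ⁻¹ F), where γ = u₀ c₁ u₁ (for n = 3 the first factor is F⁻¹ γ and the last is γ⁻¹ F). -/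
/-!
Since `φ(c_D) = F⁻¹ u₀⁻¹ F`, we have `φⁿ(c_D) = (φⁿ⁻¹ F)⁻¹ u_{n-1}⁻¹ φⁿ⁻¹ F`. As `φ` shifts every
generator other than `c_D`, `φ(F) = (c₂ ⋯ c_D) F⁻¹ u₀⁻¹ F = c₁⁻¹ u₀⁻¹ F`, and iterating,
`φᵏ(F) = (u₀ c₁ u₁ c₂ ⋯ u_{k-1} c_k)⁻¹ F` for `k ≤ D`: the prefix word only involves `c_j` with
`j < D` when `φ` is applied to it. Finally `u₀ c₁ ⋯ u_{k-1} c_k = γ c₂ u₂ ⋯ c_{k-1} u_{k-1} c_k`.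
-/

-- The coercion `List ℕ → List ℤ` in `F` and in the statement elaborates to a monadic bind.
lemma List.map_natCast_coe {α : Type*} (f : ℤ → α) (l : List ℕ) :
    List.map f (l : List ℤ) = l.map fun i : ℕ => f i := by
  rw [bind_pure_comp, List.map_eq_map, List.map_map]
  rfl

lemma F_eq_prod (D : ℕ) : F D = ((List.range D).map fun i : ℕ => c ((i : ℤ) + 1)).prod := by
  rw [F, List.map_natCast_coe]

namespace φ

variable (D : ℕ)

lemma apply_u (m : ℤ) : φ D (u m) = u (m + 1) := by
  simp [φ, u]

lemma apply_c_of_ne {m : ℤ} (h : m ≠ D) : φ D (c m) = c (m + 1) := by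
  simp [φ, c, h]

lemma apply_c_self : φ D (c D) = (F D)⁻¹ * (u 0)⁻¹ * F D := by
  simp [φ, c]

lemma iterate_u (k : ℕ) (m : ℤ) : (φ D)^[k] (u m) = u (m + k) := by
  induction k with
  | zero => simp
  | succ k ih =>
    rw [Function.iterate_succ_apply', ih, apply_u]
    push_cast
    ring_nf

lemma apply_F (hD : 1 ≤ D) : φ D (F D) = (c 1)⁻¹ * (u 0)⁻¹ * F D := by
  obtain ⟨E, rfl⟩ := Nat.exists_eq_add_of_le' hD
  have h_shift : φ (E + 1) ((List.range E).map fun i : ℕ => c ((i : ℤ) + 1)).prod =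
      ((List.range E).map fun i : ℕ => c ((i : ℤ) + 2)).prod := by
    rw [map_list_prod, List.map_map]
    refine congrArg _ (List.map_congr_left fun i hi => ?_)
    have : i < E := List.mem_range.mp hi
    rw [Function.comp_apply, apply_c_of_ne _ (by push_cast; omega)]
    ring_nf
  have h_last : F (E + 1) = ((List.range E).map fun i : ℕ => c ((i : ℤ) + 1)).prod * c (E + 1) := by
    rw [F_eq_prod, List.prod_range_succ]
  have h_first : F (E + 1) = c 1 * ((List.range E).map fun i : ℕ => c ((i : ℤ) + 2)).prod := by
    rw [F_eq_prod, List.prod_range_succ']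
    push_cast
    ring_nf
  have h_self : φ (E + 1) (c (E + 1)) = (F (E + 1))⁻¹ * (u 0)⁻¹ * F (E + 1) := by
    exact_mod_cast apply_c_self (E + 1)
  calc φ (E + 1) (F (E + 1))
      = ((List.range E).map fun i : ℕ => c ((i : ℤ) + 2)).prod *
          ((F (E + 1))⁻¹ * (u 0)⁻¹ * F (E + 1)) := by
        conv_lhs => rw [h_last]
        rw [map_mul, h_shift, h_self]
    _ = (c 1)⁻¹ * (u 0)⁻¹ * F (E + 1) := by
        rw [h_first]
        group

end φ

def ucWord : ℕ → G
  | 0 => 1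
  | k + 1 => ucWord k * (u k * c (k + 1))

lemma ucWord_succ_eq_mul_φ {D k : ℕ} (hk : k < D) :
    ucWord (k + 1) = u 0 * c 1 * φ D (ucWord k) := by
  induction k with
  | zero => simp [ucWord]
  | succ k ih =>
    have h_ne : ((k : ℤ) + 1) ≠ D := by omega
    conv_lhs => rw [ucWord.eq_2 (k + 1), ih (by omega)]
    rw [ucWord.eq_2 k, map_mul, map_mul, φ.apply_u, φ.apply_c_of_ne _ h_ne]
    push_cast
    group

lemma φ.iterate_F {D k : ℕ} (hk : k ≤ D) : (φ D)^[k] (F D) = (ucWord k)⁻¹ * F D := by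
  induction k with
  | zero => simp [ucWord]
  | succ k ih =>
    rw [Function.iterate_succ_apply', ih (by omega), map_mul, map_inv, apply_F D (by omega),
      ucWord_succ_eq_mul_φ (D := D) (by omega)]
    group

lemma ucWord_add_two (m : ℕ) :
    ucWord (m + 2) = u 0 * c 1 * u 1 *
      ((List.range m).map fun i : ℕ => c ((i : ℤ) + 2) * u ((i : ℤ) + 2)).prod * c (m + 2) := by
  induction m with
  | zero => simp [ucWord, mul_assoc]
  | succ m ih =>
    rw [ucWord, ih, List.prod_range_succ]
    push_cast
    group

theorem stmt_5_general (D : ℕ) (n : ℕ) (hn1 : 3 ≤ n) (hn2 : n ≤ D + 1) :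
    let γ : G := u 0 * c 1 * u 1
    let Q : G := ((List.range (n - 3)).map (fun i => c ((i : ℤ) + 2) * u ((i : ℤ) + 2))).prod
    (⇑(φ D))^[n] (c D) =
      ((F D)⁻¹ * γ * Q) *
      (c ((n : ℤ) - 1) * (u ((n : ℤ) - 1))⁻¹ * (c ((n : ℤ) - 1))⁻¹) *
      (Q⁻¹ * γ⁻¹ * F D) := by
  intro γ Q
  obtain ⟨m, rfl⟩ := Nat.exists_eq_add_of_le' hn1
  have hQ : γ * Q * c (m + 2) = ucWord (m + 2) := by
    simp only [γ, Q, ucWord_add_two, Nat.add_sub_cancel, List.map_natCast_coe]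
  have h_iter : (φ D)^[m + 3] (c D) =
      (F D)⁻¹ * ucWord (m + 2) * (u (m + 2))⁻¹ * (ucWord (m + 2))⁻¹ * F D := by
    rw [Function.iterate_succ_apply, φ.apply_c_self, iterate_map_mul, iterate_map_mul,
      iterate_map_inv, iterate_map_inv, φ.iterate_u, φ.iterate_F (by omega)]
    push_cast
    group
  rw [h_iter, ← hQ]
  push_cast
  group

theorem stmt_5 (D : ℕ) (hD : 1 < D) (n : ℕ) (hn1 : 3 ≤ n) (hn2 : n ≤ D + 1) :
    let γ : G := u 0 * c 1 * u 1
    let Q : G := ((List.range (n - 3)).map (fun i => c ((i : ℤ) + 2) * u ((i : ℤ) + 2))).prod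
    (⇑(φ D))^[n] (c D) =
      ((F D)⁻¹ * γ * Q) *
      (c ((n : ℤ) - 1) * (u ((n : ℤ) - 1))⁻¹ * (c ((n : ℤ) - 1))⁻¹) *
      (Q⁻¹ * γ⁻¹ * F D) :=
  stmt_5_general D n hn1 hn2
end
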